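/- Let q ≥ 3 be a prime power and t, k, n integers with 0 < 2t < k and n ≥ k + t + 1. Let δ ∈ F_{q^n} with δ ≠ 0, F(X) = X + δX^{q^{2t}}, and let G(X) = X^{q^{2t}} + ∑_{i=2t+1}^{k−1} c_i X^{q^i} + C X^{q^k} with c_i ∈ F_{q^n} and C ≠ 0. Then there exists λ ∈ F_{q^n} ∖ F_q such that F(λ) ≠ 0, G(λ) ≠ 0, and L_ξ(λ) := (ξ − ξ^{q^t})^{q^{k+t}} (ξ^{q^{k−t}} − ξ)^{q^t} F(λ)^{q^t+1} + δ (ξ^{q^k} − ξ)^{q^t(q^t+1)} λ^{q^t(q^t+1)} ≠ 0 for every ξ in the algebraic closure of F_q with ξ^{q^{k−2t}} = ξ and ξ^{q^{k−t}} ≠ ξ. (For each such ξ, L_ξ is a nonzero polynomial in λ of degree q^{3t} + q^{2t}, so the union of its root sets over the at most q^{k−2t} relevant ξ has size at most q^{k+t} + q^k < q^n.) -/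

import Mathlib

/-! Every condition on `λ` says that `λ` is not a root of one nonzero polynomial: `X^q - X`, `F`,
`G`, or `L_ξ` for one of the at most `q^(k-2t)` admissible `ξ`. For admissible `ξ` the leading
coefficient of `L_ξ` is `(ξ - ξ^(q^t))^(q^(k+t)) (ξ^(q^(k-t)) - ξ)^(q^t) δ^(q^t+1) ≠ 0`, so the product
of all these polynomials is nonzero of degree at most `q + q^(2t) + q^k + q^(k+t) + q^k < q^n`.
Since `X^(q^n) - X` is separable and has `q^n` roots, one of them avoids the product. -/

noncomputable section

/-- `F(x) = x + δ x^(q^(2t))` (value at `x`). -/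
def Fval (q t : ℕ) {Ω : Type*} [Field Ω] (δ x : Ω) : Ω := x + δ * x ^ q ^ (2 * t)

/-- `G(x) = x^(q^(2t)) + ∑_{i=2t+1}^{k-1} c_i x^(q^i) + C x^(q^k)` (value at `x`). -/
def Gval (q t k : ℕ) {Ω : Type*} [Field Ω] (c : ℕ → Ω) (Cc x : Ω) : Ω :=
  x ^ q ^ (2 * t) + (∑ i ∈ Finset.Ico (2 * t + 1) k, c i * x ^ q ^ i) + Cc * x ^ q ^ k

open Polynomial

section PowEqSelf

variable {K : Type*} [Field K]

theorem mem_roots_X_pow_sub_X {N : ℕ} (hN : 1 < N) {x : K} :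
    x ∈ (X ^ N - X : K[X]).roots ↔ x ^ N = x := by
  simp [mem_roots (FiniteField.X_pow_card_sub_X_ne_zero K hN), sub_eq_zero]

theorem card_roots_toFinset_X_pow_sub_X [IsAlgClosed K] [DecidableEq K] {N : ℕ} (hN : 1 < N)
    (hchar : (N : K) = 0) : (X ^ N - X : K[X]).roots.toFinset.card = N := by
  have hsep : (X ^ N - X : K[X]).Separable :=
    galois_poly_separable (ringChar K) N (ringChar.dvd hchar)
  rw [Multiset.toFinset_card_of_nodup (nodup_roots hsep),
    splits_iff_card_roots.mp (IsAlgClosed.splits _), FiniteField.X_pow_card_sub_X_natDegree_eq K hN]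

theorem exists_pow_eq_self_eval_ne_zero [IsAlgClosed K] {N : ℕ} (hN : 1 < N)
    (hchar : (N : K) = 0) {P : K[X]} (hP : P ≠ 0) (hdeg : P.natDegree < N) :
    ∃ x : K, x ^ N = x ∧ P.eval x ≠ 0 := by
  classical
  have hcard : P.roots.toFinset.card < (X ^ N - X : K[X]).roots.toFinset.card := by
    rw [card_roots_toFinset_X_pow_sub_X hN hchar]
    exact (Multiset.toFinset_card_le _).trans_lt ((card_roots' P).trans_lt hdeg)
  obtain ⟨x, hx, hxP⟩ := Finset.exists_mem_notMem_of_card_lt_card hcard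
  rw [Multiset.mem_toFinset, mem_roots_X_pow_sub_X hN] at hx
  rw [Multiset.mem_toFinset, mem_roots hP, IsRoot.def] at hxP
  exact ⟨x, hx, hxP⟩

end PowEqSelf

section Polynomials

variable {K : Type*} [Field K] (q t k : ℕ)

def Fpoly (δ : K) : K[X] := X + C δ * X ^ q ^ (2 * t)

def Gpoly (c : ℕ → K) (Cc : K) : K[X] :=
  X ^ q ^ (2 * t) + ∑ i ∈ Finset.Ico (2 * t + 1) k, C (c i) * X ^ q ^ i + C Cc * X ^ q ^ k

def Lpoly (δ ξ : K) : K[X] :=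
  C ((ξ - ξ ^ q ^ t) ^ q ^ (k + t) * (ξ ^ q ^ (k - t) - ξ) ^ q ^ t) * Fpoly q t δ ^ (q ^ t + 1)
    + C (δ * (ξ ^ q ^ k - ξ) ^ (q ^ t * (q ^ t + 1))) * X ^ (q ^ t * (q ^ t + 1))

variable {q t k}

@[simp]
theorem eval_Fpoly (δ x : K) : (Fpoly q t δ).eval x = Fval q t δ x := by
  simp [Fpoly, Fval]

@[simp]
theorem eval_Gpoly (c : ℕ → K) (Cc x : K) : (Gpoly q t k c Cc).eval x = Gval q t k c Cc x := by
  simp [Gpoly, Gval, eval_finsetSum]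

theorem eval_Lpoly (δ ξ x : K) : (Lpoly q t k δ ξ).eval x =
    (ξ - ξ ^ q ^ t) ^ q ^ (k + t) * (ξ ^ q ^ (k - t) - ξ) ^ q ^ t * Fval q t δ x ^ (q ^ t + 1)
      + δ * (ξ ^ q ^ k - ξ) ^ (q ^ t * (q ^ t + 1)) * x ^ (q ^ t * (q ^ t + 1)) := by
  simp [Lpoly]

theorem natDegree_Fpoly (hq : 1 < q) (ht : 0 < t) {δ : K} (hδ : δ ≠ 0) :
    (Fpoly q t δ).natDegree = q ^ (2 * t) := by
  have hlt : 1 < q ^ (2 * t) := Nat.one_lt_pow (by omega) hq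
  rw [Fpoly, natDegree_add_eq_right_of_natDegree_lt] <;> rw [natDegree_C_mul_X_pow _ _ hδ]
  rwa [natDegree_X]

theorem Fpoly_ne_zero (hq : 1 < q) (ht : 0 < t) {δ : K} (hδ : δ ≠ 0) : Fpoly q t δ ≠ 0 :=
  ne_zero_of_natDegree_gt ((Nat.one_lt_pow (by omega) hq).trans_eq (natDegree_Fpoly hq ht hδ).symm)

theorem coeff_Gpoly_q_pow (hq : 1 < q) (h2tk : 2 * t < k) (c : ℕ → K) (Cc : K) :
    (Gpoly q t k c Cc).coeff (q ^ k) = Cc := by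
  have hlt : ∀ i < k, q ^ i ≠ q ^ k := fun i hi => (Nat.pow_lt_pow_right hq hi).ne
  have hsum : ∀ i ∈ Finset.Ico (2 * t + 1) k, (C (c i) * X ^ q ^ i).coeff (q ^ k) = 0 := by
    intro i hi
    simp [coeff_X_pow, (hlt i (Finset.mem_Ico.mp hi).2).symm]
  rw [Gpoly, coeff_add, coeff_add, finsetSum_coeff, Finset.sum_eq_zero hsum]
  simp [coeff_X_pow, (hlt _ h2tk).symm]

theorem Gpoly_ne_zero (hq : 1 < q) (h2tk : 2 * t < k) (c : ℕ → K) {Cc : K} (hCc : Cc ≠ 0) :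
    Gpoly q t k c Cc ≠ 0 := fun h => hCc <| by
  simpa [h] using (coeff_Gpoly_q_pow hq h2tk c Cc).symm

theorem natDegree_Gpoly_le (hq : 1 < q) (h2tk : 2 * t < k) (c : ℕ → K) (Cc : K) :
    (Gpoly q t k c Cc).natDegree ≤ q ^ k := by
  have hle : ∀ i < k, q ^ i ≤ q ^ k := fun i hi => (Nat.pow_lt_pow_right hq hi).le
  refine natDegree_add_le_of_degree_le (natDegree_add_le_of_degree_le ?_ ?_) ?_
  · rw [natDegree_X_pow]; exact hle _ h2tk
  · refine natDegree_sum_le_of_forall_le _ _ fun i hi => (natDegree_C_mul_le _ _).trans ?_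
    rw [natDegree_X_pow]; exact hle _ (Finset.mem_Ico.mp hi).2
  · exact (natDegree_C_mul_le _ _).trans (natDegree_X_pow _).le

theorem Lpoly_coeff_ne_zero (h2tk : 2 * t < k) {ξ : K} (hξ : ξ ^ q ^ (k - 2 * t) = ξ)
    (hξ' : ξ ^ q ^ (k - t) ≠ ξ) :
    (ξ - ξ ^ q ^ t) ^ q ^ (k + t) * (ξ ^ q ^ (k - t) - ξ) ^ q ^ t ≠ 0 := by
  refine mul_ne_zero (pow_ne_zero _ (sub_ne_zero.mpr fun h => hξ' ?_))
    (pow_ne_zero _ (sub_ne_zero.mpr hξ'))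
  rw [show k - t = k - 2 * t + t by omega, pow_add, pow_mul, hξ, ← h]

theorem natDegree_Lpoly (hq : 1 < q) (ht : 0 < t) (h2tk : 2 * t < k) {δ ξ : K} (hδ : δ ≠ 0)
    (hξ : ξ ^ q ^ (k - 2 * t) = ξ) (hξ' : ξ ^ q ^ (k - t) ≠ ξ) :
    (Lpoly q t k δ ξ).natDegree = q ^ (2 * t) * (q ^ t + 1) := by
  have hFpow : (Fpoly q t δ ^ (q ^ t + 1)).natDegree = q ^ (2 * t) * (q ^ t + 1) := by
    rw [natDegree_pow, natDegree_Fpoly hq ht hδ, mul_comm]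
  have hlt : q ^ t * (q ^ t + 1) < q ^ (2 * t) * (q ^ t + 1) :=
    Nat.mul_lt_mul_of_pos_right (Nat.pow_lt_pow_right hq (by omega)) (by omega)
  rw [Lpoly, natDegree_add_eq_left_of_natDegree_lt] <;>
    rw [natDegree_C_mul (Lpoly_coeff_ne_zero h2tk hξ hξ'), hFpow]
  exact (natDegree_C_mul_le _ _).trans_lt ((natDegree_X_pow _).trans_lt hlt)

end Polynomials

section AdmissibleXi

variable {K : Type*} [Field K] (q t k : ℕ)

open Classical in
def admissibleXi : Finset K :=
  (X ^ q ^ (k - 2 * t) - X : K[X]).roots.toFinset.filter fun ξ => ξ ^ q ^ (k - t) ≠ ξ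

variable {q t k}

theorem mem_admissibleXi (hq : 1 < q) (h2tk : 2 * t < k) {ξ : K} :
    ξ ∈ admissibleXi q t k ↔ ξ ^ q ^ (k - 2 * t) = ξ ∧ ξ ^ q ^ (k - t) ≠ ξ := by
  classical
  rw [admissibleXi, Finset.mem_filter, Multiset.mem_toFinset,
    mem_roots_X_pow_sub_X (Nat.one_lt_pow (by omega) hq)]

theorem card_admissibleXi_le (hq : 1 < q) (h2tk : 2 * t < k) :
    (admissibleXi (K := K) q t k).card ≤ q ^ (k - 2 * t) := by
  classical
  calc (admissibleXi (K := K) q t k).card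
      ≤ Multiset.card (X ^ q ^ (k - 2 * t) - X : K[X]).roots :=
        (Finset.card_filter_le _ _).trans (Multiset.toFinset_card_le _)
    _ ≤ _ := card_roots' _
    _ = q ^ (k - 2 * t) :=
        FiniteField.X_pow_card_sub_X_natDegree_eq K (Nat.one_lt_pow (by omega) hq)

end AdmissibleXi

theorem degree_count_lt_pow {q n t k : ℕ} (hq3 : 3 ≤ q) (ht : 0 < t) (h2tk : 2 * t < k)
    (hn : k + t + 1 ≤ n) :
    q + q ^ (2 * t) + q ^ k + q ^ (k - 2 * t) * (q ^ (2 * t) * (q ^ t + 1)) < q ^ n := by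
  have hprod : q ^ (k - 2 * t) * (q ^ (2 * t) * (q ^ t + 1)) = q ^ k * q ^ t + q ^ k := by
    rw [← mul_assoc, ← pow_add, Nat.sub_add_cancel h2tk.le, mul_add, mul_one]
  have hq_le : q ≤ q ^ k := Nat.le_self_pow (by omega) q
  have h2t_lt : q ^ (2 * t) < q ^ k := Nat.pow_lt_pow_right (by omega) h2tk
  have h3k : 3 * q ^ k ≤ q ^ k * q ^ t :=
    (Nat.mul_le_mul_left _ (hq3.trans (Nat.le_self_pow (by omega) q))).trans_eq' (mul_comm _ _)
  have hn' : 3 * (q ^ k * q ^ t) ≤ q ^ n := by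
    rw [mul_comm 3, ← pow_add]
    exact (Nat.mul_le_mul_left _ hq3).trans ((pow_succ _ _).symm.le.trans
      (Nat.pow_le_pow_right (by omega) hn))
  omega

section AvoidPoly

variable {K : Type*} [Field K] {q t k : ℕ}

theorem natDegree_prod_Lpoly_le (hq : 1 < q) (ht : 0 < t) (h2tk : 2 * t < k) {δ : K}
    (hδ : δ ≠ 0) : (∏ ξ ∈ admissibleXi q t k, Lpoly q t k δ ξ).natDegree
      ≤ q ^ (k - 2 * t) * (q ^ (2 * t) * (q ^ t + 1)) := by
  have hL : ∀ ξ ∈ admissibleXi q t k, (Lpoly q t k δ ξ).natDegree = q ^ (2 * t) * (q ^ t + 1) :=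
    fun ξ hξ => natDegree_Lpoly hq ht h2tk hδ ((mem_admissibleXi hq h2tk).mp hξ).1
      ((mem_admissibleXi hq h2tk).mp hξ).2
  calc (∏ ξ ∈ admissibleXi q t k, Lpoly q t k δ ξ).natDegree
      ≤ ∑ ξ ∈ admissibleXi q t k, (Lpoly q t k δ ξ).natDegree := natDegree_prod_le _ _
    _ = (admissibleXi (K := K) q t k).card * (q ^ (2 * t) * (q ^ t + 1)) := by
      rw [Finset.sum_congr rfl hL, Finset.sum_const, smul_eq_mul]
    _ ≤ _ := Nat.mul_le_mul_right _ (card_admissibleXi_le hq h2tk)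

theorem prod_Lpoly_ne_zero (hq : 1 < q) (ht : 0 < t) (h2tk : 2 * t < k) {δ : K} (hδ : δ ≠ 0) :
    ∏ ξ ∈ admissibleXi q t k, Lpoly q t k δ ξ ≠ 0 := by
  refine Finset.prod_ne_zero_iff.mpr fun ξ hξ => ne_zero_of_natDegree_gt (n := 0) ?_
  rw [mem_admissibleXi hq h2tk] at hξ
  rw [natDegree_Lpoly hq ht h2tk hδ hξ.1 hξ.2]
  positivity

variable (q t k)

def avoidPoly (δ : K) (c : ℕ → K) (Cc : K) : K[X] :=
  (X ^ q - X) * Fpoly q t δ * Gpoly q t k c Cc * ∏ ξ ∈ admissibleXi q t k, Lpoly q t k δ ξ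

variable {q t k}

theorem avoidPoly_ne_zero (hq : 1 < q) (ht : 0 < t) (h2tk : 2 * t < k) {δ Cc : K} (c : ℕ → K)
    (hδ : δ ≠ 0) (hCc : Cc ≠ 0) : avoidPoly q t k δ c Cc ≠ 0 :=
  mul_ne_zero (mul_ne_zero (mul_ne_zero (FiniteField.X_pow_card_sub_X_ne_zero K hq)
    (Fpoly_ne_zero hq ht hδ)) (Gpoly_ne_zero hq h2tk c hCc)) (prod_Lpoly_ne_zero hq ht h2tk hδ)

theorem natDegree_avoidPoly_lt {n : ℕ} (hq3 : 3 ≤ q) (ht : 0 < t) (h2tk : 2 * t < k)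
    (hn : k + t + 1 ≤ n) {δ : K} (c : ℕ → K) (Cc : K) (hδ : δ ≠ 0) :
    (avoidPoly q t k δ c Cc).natDegree < q ^ n := by
  have hq : 1 < q := by omega
  refine lt_of_le_of_lt ?_ (degree_count_lt_pow hq3 ht h2tk hn)
  refine natDegree_mul_le.trans (add_le_add (natDegree_mul_le.trans (add_le_add
    (natDegree_mul_le.trans (add_le_add ?_ (natDegree_Fpoly hq ht hδ).le))
    (natDegree_Gpoly_le hq h2tk c Cc))) (natDegree_prod_Lpoly_le hq ht h2tk hδ))
  exact (FiniteField.X_pow_card_sub_X_natDegree_eq K hq).le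

end AvoidPoly

theorem stmt_10_general (q n t k : ℕ) (hq3 : 3 ≤ q)
    (ht : 0 < t) (h2tk : 2 * t < k) (hn : k + t + 1 ≤ n)
    (F0 : Type) [Field F0] [Fintype F0] (hF0 : Fintype.card F0 = q)
    (δ Cc : AlgebraicClosure F0) (c : ℕ → AlgebraicClosure F0)
    (hδ : δ ≠ 0) (hCc : Cc ≠ 0) :
    ∃ l : AlgebraicClosure F0,
      l ^ q ^ n = l ∧ l ^ q ≠ l ∧
      Fval q t δ l ≠ 0 ∧ Gval q t k c Cc l ≠ 0 ∧
      ∀ ξ : AlgebraicClosure F0, ξ ^ q ^ (k - 2 * t) = ξ → ξ ^ q ^ (k - t) ≠ ξ →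
        (ξ - ξ ^ q ^ t) ^ q ^ (k + t) * (ξ ^ q ^ (k - t) - ξ) ^ q ^ t
            * Fval q t δ l ^ (q ^ t + 1)
          + δ * (ξ ^ q ^ k - ξ) ^ (q ^ t * (q ^ t + 1)) * l ^ (q ^ t * (q ^ t + 1)) ≠ 0 := by
  have hq : 1 < q := by omega
  have hchar : ((q ^ n : ℕ) : AlgebraicClosure F0) = 0 := by
    rw [Nat.cast_pow, ← hF0, ← map_natCast (algebraMap F0 _), FiniteField.cast_card_eq_zero,
      map_zero, zero_pow (by omega)]
  obtain ⟨l, hl, hPl⟩ := exists_pow_eq_self_eval_ne_zero (Nat.one_lt_pow (by omega) hq) hchar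
    (avoidPoly_ne_zero hq ht h2tk c hδ hCc) (natDegree_avoidPoly_lt hq3 ht h2tk hn c Cc hδ)
  simp only [avoidPoly, eval_mul, eval_prod, mul_ne_zero_iff, Finset.prod_ne_zero_iff, eval_Fpoly,
    eval_Gpoly, eval_Lpoly, eval_sub, eval_pow, eval_X, sub_ne_zero] at hPl
  obtain ⟨⟨⟨hlq, hF⟩, hG⟩, hL⟩ := hPl
  exact ⟨l, hl, hlq, hF, hG, fun ξ hξ hξ' => hL ξ ((mem_admissibleXi hq h2tk).mpr ⟨hξ, hξ'⟩)⟩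

/-- Let `q ≥ 3` be a prime power, `0 < 2t < k`, `n ≥ k+t+1`,
`δ ∈ F_(q^n)` nonzero, `F(X) = X + δX^(q^(2t))` and
`G(X) = X^(q^(2t)) + ∑ c_i X^(q^i) + C X^(q^k)` with coefficients in `F_(q^n)`, `C ≠ 0`.
Then there exists `λ ∈ F_(q^n) ∖ F_q` with `F(λ) ≠ 0`, `G(λ) ≠ 0` and `L_ξ(λ) ≠ 0` for
every `ξ` in the algebraic closure of `F_q` with `ξ^(q^(k−2t)) = ξ` and
`ξ^(q^(k−t)) ≠ ξ`. -/
theorem stmt_10 (q n t k : ℕ) (hq3 : 3 ≤ q)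
    (hq : ∃ p e : ℕ, p.Prime ∧ 0 < e ∧ q = p ^ e)
    (ht : 0 < t) (h2tk : 2 * t < k) (hn : k + t + 1 ≤ n)
    (F0 : Type) [Field F0] [Fintype F0] (hF0 : Fintype.card F0 = q)
    (δ Cc : AlgebraicClosure F0) (c : ℕ → AlgebraicClosure F0)
    (hδK : δ ^ q ^ n = δ) (hCcK : Cc ^ q ^ n = Cc) (hcK : ∀ i, c i ^ q ^ n = c i)
    (hδ : δ ≠ 0) (hCc : Cc ≠ 0) :
    ∃ l : AlgebraicClosure F0,
      l ^ q ^ n = l ∧ l ^ q ≠ l ∧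
      Fval q t δ l ≠ 0 ∧ Gval q t k c Cc l ≠ 0 ∧
      ∀ ξ : AlgebraicClosure F0, ξ ^ q ^ (k - 2 * t) = ξ → ξ ^ q ^ (k - t) ≠ ξ →
        (ξ - ξ ^ q ^ t) ^ q ^ (k + t) * (ξ ^ q ^ (k - t) - ξ) ^ q ^ t
            * Fval q t δ l ^ (q ^ t + 1)
          + δ * (ξ ^ q ^ k - ξ) ^ (q ^ t * (q ^ t + 1)) * l ^ (q ^ t * (q ^ t + 1)) ≠ 0 :=
  stmt_10_general q n t k hq3 ht h2tk hn F0 hF0 δ Cc c hδ hCc
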